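/- arXiv:2404.15179 — 7 statements merged into one kernel-verified Lean document; each statement's English description precedes it below -/
import Mathlib

section
/- Proposition 1: For every d×d complex density matrix ρ (d ≥ 2), the quantities S_R and S_I satisfy S_I² ≤ 1 + S_R²; equivalently, Tr(I²) ≤ Tr(R²). -/
open Matrix
open scoped ComplexOrder

noncomputable section

/-- A density matrix: positive semidefinite with unit trace. -/
def IsDensityMatrix {d : ℕ} (ρ : Matrix (Fin d) (Fin d) ℂ) : Prop :=
  ρ.PosSemidef ∧ ρ.trace = 1

/-- The real part `R = (d/2)(ρ + ρᵀ)`. -/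
def Rpart (d : ℕ) (ρ : Matrix (Fin d) (Fin d) ℂ) : Matrix (Fin d) (Fin d) ℂ :=
  ((d : ℂ) / 2) • (ρ + ρ.transpose)

/-- The imaginary part `I = (d/2)(ρ − ρᵀ)`. -/
def Ipart (d : ℕ) (ρ : Matrix (Fin d) (Fin d) ℂ) : Matrix (Fin d) (Fin d) ℂ :=
  ((d : ℂ) / 2) • (ρ - ρ.transpose)

/-- `S_R = √(Tr(R²)/d − 1)`. -/
def SR (d : ℕ) (ρ : Matrix (Fin d) (Fin d) ℂ) : ℝ :=
  Real.sqrt ((Rpart d ρ * Rpart d ρ).trace.re / d - 1)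

/-- `S_I = √(Tr(I²)/d)`. -/
def SI (d : ℕ) (ρ : Matrix (Fin d) (Fin d) ℂ) : ℝ :=
  Real.sqrt ((Ipart d ρ * Ipart d ρ).trace.re / d)

/-! Expanding the squares gives `Tr(R²) - Tr(I²) = d² Tr(ρ ρᵀ)`. Since `ρᵀ` is again positive
semidefinite and the trace of a product of two positive semidefinite matrices is nonnegative
(write `A = S²`, so `Tr(A B) = Tr(S B S) ≥ 0`), this gives `Tr(I²) ≤ Tr(R²)`. Dividing by `d` and using
`√x ^ 2 = max x 0` then gives `S_I² ≤ 1 + S_R²`. -/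

namespace Matrix

variable {n 𝕜 : Type*} [Fintype n] [DecidableEq n] [RCLike 𝕜]

open MatrixOrder in
theorem PosSemidef.trace_mul_nonneg {A B : Matrix n n 𝕜} (hA : A.PosSemidef)
    (hB : B.PosSemidef) : 0 ≤ (A * B).trace := by
  set S := CFC.sqrt A
  have hS : S.IsHermitian := (CFC.sqrt_nonneg A).posSemidef.isHermitian
  have hSS : S * S = A := CFC.sqrt_mul_sqrt_self A hA.nonneg
  calc (0 : 𝕜) ≤ (S * B * Sᴴ).trace := (hB.mul_mul_conjTranspose_same S).trace_nonneg
    _ = (A * B).trace := by rw [hS.eq, trace_mul_cycle, hSS]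

end Matrix

theorem trace_Rpart_sq_sub_trace_Ipart_sq (d : ℕ) (ρ : Matrix (Fin d) (Fin d) ℂ) :
    (Rpart d ρ * Rpart d ρ).trace - (Ipart d ρ * Ipart d ρ).trace
      = (d : ℂ) ^ 2 * (ρ * ρᵀ).trace := by
  simp only [Rpart, Ipart, Matrix.smul_mul, Matrix.mul_smul, trace_smul, add_mul, mul_add,
    sub_mul, mul_sub, trace_add, trace_sub, smul_eq_mul]
  rw [trace_mul_comm ρᵀ ρ]
  ring

theorem trace_Ipart_sq_re_le_trace_Rpart_sq_re {d : ℕ} {ρ : Matrix (Fin d) (Fin d) ℂ}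
    (hρ : ρ.PosSemidef) :
    (Ipart d ρ * Ipart d ρ).trace.re ≤ (Rpart d ρ * Rpart d ρ).trace.re := by
  have h := congrArg Complex.re (trace_Rpart_sq_sub_trace_Ipart_sq d ρ)
  have hT : 0 ≤ (ρ * ρᵀ).trace.re := (Complex.nonneg_iff.mp (hρ.trace_mul_nonneg hρ.transpose)).1
  rw [Complex.sub_re, ← Complex.ofReal_natCast, ← Complex.ofReal_pow, Complex.re_ofReal_mul] at h
  linarith [mul_nonneg (sq_nonneg (d : ℝ)) hT]

theorem quadratic_bound_general (d : ℕ) (ρ : Matrix (Fin d) (Fin d) ℂ)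
    (hρ : IsDensityMatrix ρ) :
    SI d ρ ^ 2 ≤ 1 + SR d ρ ^ 2 ∧
    (Ipart d ρ * Ipart d ρ).trace.re ≤ (Rpart d ρ * Rpart d ρ).trace.re := by
  have hle := trace_Ipart_sq_re_le_trace_Rpart_sq_re hρ.1
  refine ⟨?_, hle⟩
  have hdiv := div_le_div_of_nonneg_right hle (Nat.cast_nonneg (α := ℝ) d)
  rw [SI, SR, Real.sq_sqrt', Real.sq_sqrt']
  grind

/-- **Proposition 1.** For every `d×d` density matrix (`d ≥ 2`),
`S_I² ≤ 1 + S_R²`; equivalently `Tr(I²) ≤ Tr(R²)`. -/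
theorem quadratic_bound (d : ℕ) (hd : 2 ≤ d) (ρ : Matrix (Fin d) (Fin d) ℂ)
    (hρ : IsDensityMatrix ρ) :
    SI d ρ ^ 2 ≤ 1 + SR d ρ ^ 2 ∧
    (Ipart d ρ * Ipart d ρ).trace.re ≤ (Rpart d ρ * Rpart d ρ).trace.re :=
  quadratic_bound_general d ρ hρ
end
end

section
/- For every even dimension d ≥ 2 and every real r with 0 ≤ r ≤ √((d−2)/2), there exists a d×d complex density matrix ρ with S_R(ρ) = r and S_I(ρ)² = 1 + r² (i.e., ρ saturates the quadratic bound S_I² ≤ 1 + S_R²). -/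
open Matrix
open scoped ComplexOrder

noncomputable section

/-!
Take `ρ` block diagonal with `2 × 2` blocks `wᵢ (1 - σ_y)`, where `wᵢ ≥ 0` and `∑ wᵢ = 1/2`;
each block is `2 wᵢ` times the projection onto `(1, -i)/√2`. As `σ_y` is antisymmetric,
`R = d (diag w ⊗ 1)` and `I = -d (diag w ⊗ σ_y)`, so `σ_y² = 1` gives `R² = I²`: every such state
saturates `S_I² ≤ 1 + S_R²`, and `S_R² = 2d ∑ wᵢ² - 1`. Playing one weight against `d/2 - 1`
equal ones lets `∑ wᵢ²` sweep `[1/(2d), 1/4]`, i.e. `S_R` sweep `[0, √((d-2)/2)]`.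
-/

open scoped Kronecker

def pauliY : Matrix (Fin 2) (Fin 2) ℂ := !![0, -Complex.I; Complex.I, 0]

theorem pauliY_transpose : pauliYᵀ = -pauliY := by
  ext i j; fin_cases i <;> fin_cases j <;> simp [pauliY]

theorem pauliY_mul_self : pauliY * pauliY = 1 := by
  ext i j; fin_cases i <;> fin_cases j <;> simp [pauliY]

theorem one_sub_pauliY_eq_vecMulVec :
    1 - pauliY = vecMulVec ![1, -Complex.I] (star ![1, -Complex.I]) := by
  ext i j; fin_cases i <;> fin_cases j <;> simp [pauliY, vecMulVec]

theorem posSemidef_one_sub_pauliY : (1 - pauliY).PosSemidef := by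
  rw [one_sub_pauliY_eq_vecMulVec]; exact posSemidef_vecMulVec_self_star _

theorem trace_submatrix_equiv {ι κ R : Type*} [Fintype ι] [Fintype κ] [AddCommMonoid R]
    (M : Matrix ι ι R) (e : κ ≃ ι) : (M.submatrix e e).trace = M.trace :=
  e.sum_comp fun i => M i i

section PairedState

variable {d : ℕ} {ι : Type*} [DecidableEq ι] (e : ι × Fin 2 ≃ Fin d) (w : ι → ℝ)

def pairedState : Matrix (Fin d) (Fin d) ℂ :=
  reindex e e (diagonal (fun i => (w i : ℂ)) ⊗ₖ (1 - pauliY))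

theorem pairedState_transpose :
    (pairedState e w)ᵀ = reindex e e (diagonal (fun i => (w i : ℂ)) ⊗ₖ (1 + pauliY)) := by
  rw [pairedState, transpose_reindex, ← kroneckerMap_transpose, diagonal_transpose,
    transpose_sub, transpose_one, pauliY_transpose, sub_neg_eq_add]

theorem Rpart_pairedState :
    Rpart d (pairedState e w) = reindex e e ((d : ℂ) • (diagonal (fun i => (w i : ℂ)) ⊗ₖ 1)) := by
  rw [Rpart, pairedState_transpose, pairedState]
  ext i j
  simp only [reindex_apply, Matrix.smul_apply, Matrix.add_apply, submatrix_apply,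
    kroneckerMap_apply, Matrix.sub_apply, smul_eq_mul]
  ring

theorem Ipart_pairedState :
    Ipart d (pairedState e w) =
      reindex e e (-(d : ℂ) • (diagonal (fun i => (w i : ℂ)) ⊗ₖ pauliY)) := by
  rw [Ipart, pairedState_transpose, pairedState]
  ext i j
  simp only [reindex_apply, Matrix.smul_apply, Matrix.sub_apply, submatrix_apply,
    kroneckerMap_apply, Matrix.add_apply, smul_eq_mul]
  ring

variable [Fintype ι]

variable {w} in
theorem posSemidef_pairedState (hw : 0 ≤ w) : (pairedState e w).PosSemidef :=
  ((PosSemidef.diagonal fun i => Complex.zero_le_real.mpr (hw i)).kronecker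
    posSemidef_one_sub_pauliY).submatrix _

theorem trace_pairedState : (pairedState e w).trace = ((2 * ∑ i, w i : ℝ) : ℂ) := by
  rw [pairedState, reindex_apply, trace_submatrix_equiv, trace_kronecker, trace_diagonal,
    trace_sub, trace_one, Fintype.card_fin, trace_fin_two]
  simp [pauliY, mul_comm]

theorem Ipart_mul_self_pairedState :
    Ipart d (pairedState e w) * Ipart d (pairedState e w) =
      Rpart d (pairedState e w) * Rpart d (pairedState e w) := by
  rw [Ipart_pairedState, Rpart_pairedState, reindex_apply, reindex_apply, submatrix_mul_equiv,
    submatrix_mul_equiv, smul_mul_smul, smul_mul_smul, ← mul_kronecker_mul, ← mul_kronecker_mul,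
    pauliY_mul_self, one_mul, neg_mul_neg]

theorem trace_Rpart_mul_self_pairedState :
    (Rpart d (pairedState e w) * Rpart d (pairedState e w)).trace =
      ((2 * d ^ 2 * ∑ i, w i ^ 2 : ℝ) : ℂ) := by
  rw [Rpart_pairedState, reindex_apply, submatrix_mul_equiv, trace_submatrix_equiv,
    smul_mul_smul, ← mul_kronecker_mul, trace_smul, trace_kronecker, diagonal_mul_diagonal,
    trace_diagonal, one_mul, trace_one, Fintype.card_fin]
  push_cast
  simp only [sq, smul_eq_mul]
  ring

end PairedState

theorem SR_eq_and_SI_sq_eq {d : ℕ} {ρ : Matrix (Fin d) (Fin d) ℂ} {r : ℝ} (hr : 0 ≤ r)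
    (hR : (Rpart d ρ * Rpart d ρ).trace.re / d = 1 + r ^ 2)
    (hI : (Ipart d ρ * Ipart d ρ).trace.re / d = 1 + r ^ 2) :
    SR d ρ = r ∧ SI d ρ ^ 2 = 1 + r ^ 2 :=
  ⟨by rw [SR, hR, add_sub_cancel_left, Real.sqrt_sq hr],
    by rw [SI, hI, Real.sq_sqrt (by positivity)]⟩

theorem exists_pairWeights {n : ℕ} {r s : ℝ} (hsn : s ^ 2 = n) (hr0 : 0 ≤ r) (hrs : r ≤ s) :
    ∃ w : Fin (n + 1) → ℝ, 0 ≤ w ∧ ∑ i, w i = 1 / 2 ∧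
      ∑ i, w i ^ 2 = (1 + r ^ 2) / (4 * (n + 1)) := by
  have hs : 0 ≤ s := hr0.trans hrs
  -- the uniform weights `1/(2(n+1))` shifted by `r/(2(n+1)s) • (n, -1, …, -1)`
  refine ⟨Fin.cons ((1 + s * r) / (2 * (n + 1))) fun _ => (s - r) / (2 * (n + 1) * s),
    fun i => ?_, ?_, ?_⟩
  · cases i using Fin.cases with
    | zero => simp only [Fin.cons_zero, Pi.zero_apply]; positivity
    | succ i =>
      simp only [Fin.cons_succ, Pi.zero_apply]
      exact div_nonneg (sub_nonneg.mpr hrs) (by positivity)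
  all_goals
    simp only [Fin.sum_univ_succ, Fin.cons_zero, Fin.cons_succ, Finset.sum_const,
      Finset.card_univ, Fintype.card_fin, nsmul_eq_mul]
    rw [← hsn]
    rcases hs.eq_or_lt with rfl | hs
    · obtain rfl : r = 0 := le_antisymm hrs hr0
      norm_num
    · field_simp
      ring

/-- For every even dimension `d ≥ 2` and every `0 ≤ r ≤ √((d−2)/2)`,
there is a `d×d` density matrix with `S_R = r` and `S_I² = 1 + r²`. -/
theorem quadratic_bound_saturated_even (d : ℕ) (hd : 2 ≤ d) (hdeven : Even d)
    (r : ℝ) (hr0 : 0 ≤ r) (hr1 : r ≤ Real.sqrt (((d : ℝ) - 2) / 2)) :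
    ∃ ρ : Matrix (Fin d) (Fin d) ℂ, IsDensityMatrix ρ ∧
      SR d ρ = r ∧ SI d ρ ^ 2 = 1 + r ^ 2 := by
  obtain ⟨n, rfl⟩ : ∃ n, d = 2 * (n + 1) := by
    obtain ⟨m, rfl⟩ := hdeven
    exact ⟨m - 1, by omega⟩
  rw [show ((2 * (n + 1) : ℕ) - 2) / 2 = (n : ℝ) by push_cast; ring] at hr1
  obtain ⟨w, hw0, hw1, hw2⟩ := exists_pairWeights (Real.sq_sqrt n.cast_nonneg) hr0 hr1
  let e : Fin (n + 1) × Fin 2 ≃ Fin (2 * (n + 1)) :=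
    finProdFinEquiv.trans (finCongr (mul_comm _ _))
  have hR : (Rpart _ (pairedState e w) * Rpart _ (pairedState e w)).trace.re /
      (2 * (n + 1) : ℕ) = 1 + r ^ 2 := by
    rw [trace_Rpart_mul_self_pairedState, Complex.ofReal_re, hw2]
    push_cast
    field_simp
    ring
  refine ⟨pairedState e w, ⟨posSemidef_pairedState e hw0, ?_⟩, SR_eq_and_SI_sq_eq hr0 hR ?_⟩
  · rw [trace_pairedState, hw1]; norm_num
  · rwa [Ipart_mul_self_pairedState]
end
end

section
/- For every odd dimension d ≥ 3 and every real r with 1/√(d−1) ≤ r ≤ √((d−2)/2), there exists a d×d complex density matrix ρ with S_R(ρ) = r and S_I(ρ)² = 1 + r² (i.e., the quadratic bound S_I² ≤ 1 + S_R² is saturated in odd dimensions whenever S_R ≥ 1/√(d−1)). -/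
open Matrix
open scoped ComplexOrder

/-!
If `ρ ρᵀ = 0`, then `Tr R² = Tr I² = (d² / 2) Tr ρ²`, so `S_I² = 1 + S_R² = d Tr ρ² / 2`, and it
suffices to find a density matrix with `ρ ρᵀ = 0` and purity `Tr ρ² = 2 (1 + r²) / d`.
For `d = 2k + 1` the vectors `(e_j + i e_{k+j}) / √2`, `j < k`, are orthonormal and isotropic
(`uᵀ u = 0`), so they are the columns of a matrix `B` with `Bᴴ B = 1` and `Bᵀ B = 0`. Then
`ρ = B diag(w) Bᴴ` satisfies `ρ ρᵀ = 0` for every probability vector `w`, and its purity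
`∑ w_j²` takes every value in `[1/k, 1]`, which is exactly the range allowed by the bounds on `r`.
-/

section TraceOfParts

lemma trace_transpose_mul_self {n R : Type*} [Fintype n] [CommSemiring R] (ρ : Matrix n n R) :
    (ρᵀ * ρ).trace = (ρ * ρᵀ).trace :=
  trace_mul_comm _ _

lemma trace_transpose_mul_transpose {n R : Type*} [Fintype n] [CommSemiring R]
    (ρ : Matrix n n R) :
    (ρᵀ * ρᵀ).trace = (ρ * ρ).trace := by
  rw [← transpose_mul, trace_transpose]

lemma trace_Rpart_mul_self (d : ℕ) (ρ : Matrix (Fin d) (Fin d) ℂ) :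
    (Rpart d ρ * Rpart d ρ).trace = (d : ℂ) ^ 2 / 2 * ((ρ * ρ).trace + (ρ * ρᵀ).trace) := by
  simp only [Rpart, smul_mul_smul_comm, trace_smul, add_mul, mul_add, trace_add,
    trace_transpose_mul_self, trace_transpose_mul_transpose, smul_eq_mul]
  ring

lemma trace_Ipart_mul_self (d : ℕ) (ρ : Matrix (Fin d) (Fin d) ℂ) :
    (Ipart d ρ * Ipart d ρ).trace = (d : ℂ) ^ 2 / 2 * ((ρ * ρ).trace - (ρ * ρᵀ).trace) := by
  simp only [Ipart, smul_mul_smul_comm, trace_smul, sub_mul, mul_sub, trace_sub,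
    trace_transpose_mul_self, trace_transpose_mul_transpose, smul_eq_mul]
  ring

lemma re_sq_div_two_mul_div (d : ℕ) (p : ℝ) :
    ((d : ℂ) ^ 2 / 2 * p).re / d = d * p / 2 := by
  rcases Nat.eq_zero_or_pos d with rfl | hd
  · simp
  · rw [show (d : ℂ) ^ 2 / 2 * p = ((d ^ 2 / 2 * p : ℝ) : ℂ) by push_cast; rfl, Complex.ofReal_re]
    field_simp

variable {d : ℕ} {ρ : Matrix (Fin d) (Fin d) ℂ} {p : ℝ}

lemma SR_eq_of_mul_transpose_eq_zero (hρ : ρ * ρᵀ = 0) (hp : (ρ * ρ).trace = p) :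
    SR d ρ = √(d * p / 2 - 1) := by
  rw [SR, trace_Rpart_mul_self, hρ, trace_zero, add_zero, hp, re_sq_div_two_mul_div]

lemma SI_eq_of_mul_transpose_eq_zero (hρ : ρ * ρᵀ = 0) (hp : (ρ * ρ).trace = p) :
    SI d ρ = √(d * p / 2) := by
  rw [SI, trace_Ipart_mul_self, hρ, trace_zero, sub_zero, hp, re_sq_div_two_mul_div]

end TraceOfParts

lemma exists_probVec_sum_sq_eq {k : ℕ} (hk : 0 < k) {p : ℝ} (hp₁ : 1 / k ≤ p) (hp₂ : p ≤ 1) :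
    ∃ w : Fin k → ℝ, (∀ j, 0 ≤ w j) ∧ ∑ j, w j = 1 ∧ ∑ j, w j ^ 2 = p := by
  have hk' : (0 : ℝ) < k := Nat.cast_pos.2 hk
  let j₀ : Fin k := ⟨0, hk⟩
  -- `w t` interpolates between the uniform vector (purity `1 / k`) and a point mass (purity `1`)
  let w (t : ℝ) (j : Fin k) : ℝ := (1 - t) / k + if j = j₀ then t else 0
  have hsum (t : ℝ) : ∑ j, w t j = 1 := by
    simp only [w, Finset.sum_add_distrib, Finset.sum_ite_eq', Finset.mem_univ, if_true,
      Finset.sum_const, Finset.card_univ, Fintype.card_fin, nsmul_eq_mul]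
    field_simp
    ring
  have hsum_sq (t : ℝ) : ∑ j, w t j ^ 2 = t ^ 2 + (1 - t ^ 2) / k := by
    have hsq (j : Fin k) :
        w t j ^ 2 = ((1 - t) / k) ^ 2 + if j = j₀ then 2 * ((1 - t) / k) * t + t ^ 2 else 0 := by
      simp only [w]; split_ifs <;> ring
    simp only [hsq, Finset.sum_add_distrib, Finset.sum_ite_eq', Finset.mem_univ, if_true,
      Finset.sum_const, Finset.card_univ, Fintype.card_fin, nsmul_eq_mul]
    field_simp
    ring
  obtain ⟨t, ⟨ht₀, ht₁⟩, htp⟩ : ∃ t ∈ Set.Icc (0 : ℝ) 1, t ^ 2 + (1 - t ^ 2) / k = p :=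
    intermediate_value_Icc zero_le_one (by fun_prop) ⟨by simpa using hp₁, by simpa using hp₂⟩
  refine ⟨w t, fun j => ?_, hsum t, (hsum_sq t).trans htp⟩
  have : 0 ≤ (1 - t) / k := div_nonneg (by linarith) hk'.le
  simp only [w]; split_ifs <;> linarith

section Isotropic

variable {m n : Type*} [Fintype n]

lemma transpose_one_submatrix_mul {R : Type*} [NonAssocSemiring R] [DecidableEq n]
    (f g : m → n) :
    ((1 : Matrix n n R).submatrix id f)ᵀ * (1 : Matrix n n R).submatrix id g
      = (1 : Matrix n n R).submatrix f g := by
  ext i j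
  simp [mul_apply, one_apply]

variable [DecidableEq m]

lemma exists_isotropic_isometry_of_real_orthonormal_pair (P Q : Matrix n m ℂ)
    (hP : Pᴴ = Pᵀ) (hQ : Qᴴ = Qᵀ) (hPP : Pᵀ * P = 1) (hQQ : Qᵀ * Q = 1) (hPQ : Pᵀ * Q = 0)
    (hQP : Qᵀ * P = 0) :
    ∃ B : Matrix n m ℂ, Bᴴ * B = 1 ∧ Bᵀ * B = 0 := by
  refine ⟨((√2)⁻¹ : ℝ) • (P + Complex.I • Q), ?_, ?_⟩
  · simp only [conjTranspose_smul, conjTranspose_add, hP, hQ, star_trivial, Matrix.add_mul,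
      Matrix.mul_add, Matrix.smul_mul, Matrix.mul_smul, hPP, hQQ, hPQ, hQP, Complex.star_def,
      Complex.conj_I]
    ext i j
    by_cases hij : i = j <;> simp [hij, one_apply, Complex.ext_iff]
    ring_nf
    norm_num
  · simp only [transpose_smul, transpose_add, Matrix.add_mul, Matrix.mul_add, Matrix.smul_mul,
      Matrix.mul_smul, hPP, hQQ, hPQ, hQP]
    ext i j
    by_cases hij : i = j <;> simp [hij, Complex.ext_iff]

lemma exists_isotropic_isometry [DecidableEq n] {f g : m → n} (hf : f.Injective)
    (hg : g.Injective) (hfg : ∀ i j, f i ≠ g j) :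
    ∃ B : Matrix n m ℂ, Bᴴ * B = 1 ∧ Bᵀ * B = 0 := by
  apply exists_isotropic_isometry_of_real_orthonormal_pair ((1 : Matrix n n ℂ).submatrix id f)
    ((1 : Matrix n n ℂ).submatrix id g) (by simp) (by simp)
  all_goals
    rw [transpose_one_submatrix_mul]
  · exact submatrix_one f hf
  · exact submatrix_one g hg
  all_goals
    ext i j
    simp [one_apply, hfg, (hfg _ _).symm]

end Isotropic

lemma exists_isotropic_isometry_fin {d k : ℕ} (h : 2 * k ≤ d) :
    ∃ B : Matrix (Fin d) (Fin k) ℂ, Bᴴ * B = 1 ∧ Bᵀ * B = 0 :=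
  exists_isotropic_isometry (f := fun j => ⟨j, by omega⟩) (g := fun j => ⟨k + j, by omega⟩)
    (fun i j hij => by simpa [Fin.ext_iff] using hij)
    (fun i j hij => by simpa [Fin.ext_iff] using hij)
    (fun i j hij => by simp [Fin.ext_iff] at hij; omega)

section Construction

variable {m n R : Type*} [Fintype m] [Fintype n] [CommSemiring R] [StarRing R]
  {B : Matrix n m R}

lemma trace_mul_mul_conjTranspose_of_isometry [DecidableEq m] (hB : Bᴴ * B = 1)
    (D : Matrix m m R) :
    (B * D * Bᴴ).trace = D.trace := by
  rw [trace_mul_comm, ← Matrix.mul_assoc, hB, Matrix.one_mul]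

lemma mul_mul_conjTranspose_mul_self_of_isometry [DecidableEq m] (hB : Bᴴ * B = 1)
    (D : Matrix m m R) :
    (B * D * Bᴴ) * (B * D * Bᴴ) = B * (D * D) * Bᴴ := by
  simp only [Matrix.mul_assoc, ← Matrix.mul_assoc Bᴴ B, hB, Matrix.one_mul]

lemma mul_mul_conjTranspose_mul_transpose_of_isotropic (hB : Bᵀ * B = 0) (D : Matrix m m R) :
    (B * D * Bᴴ) * (B * D * Bᴴ)ᵀ = 0 := by
  have hB' : Bᴴ * Bᴴᵀ = 0 := by
    rw [conjTranspose_transpose, ← transpose_conjTranspose, ← conjTranspose_mul, hB,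
      conjTranspose_zero]
  simp only [transpose_mul, Matrix.mul_assoc, ← Matrix.mul_assoc Bᴴ Bᴴᵀ, hB', Matrix.zero_mul,
    Matrix.mul_zero]

end Construction

lemma exists_isDensityMatrix_purity_eq {d k : ℕ} (hk : 0 < k) (hkd : 2 * k ≤ d) {p : ℝ}
    (hp₁ : 1 / k ≤ p) (hp₂ : p ≤ 1) :
    ∃ ρ : Matrix (Fin d) (Fin d) ℂ, IsDensityMatrix ρ ∧ (ρ * ρ).trace = p ∧ ρ * ρᵀ = 0 := by
  obtain ⟨w, hw₀, hw₁, hw₂⟩ := exists_probVec_sum_sq_eq hk hp₁ hp₂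
  obtain ⟨B, hB₁, hB₀⟩ := exists_isotropic_isometry_fin (d := d) hkd
  refine ⟨B * diagonal (fun j => (w j : ℂ)) * Bᴴ, ⟨?_, ?_⟩, ?_,
    mul_mul_conjTranspose_mul_transpose_of_isotropic hB₀ _⟩
  · have hD : (diagonal fun j => (w j : ℂ)).PosSemidef :=
      posSemidef_diagonal_iff.2 fun j => Complex.zero_le_real.2 (hw₀ j)
    exact hD.mul_mul_conjTranspose_same B
  · rw [trace_mul_mul_conjTranspose_of_isometry hB₁, trace_diagonal]
    exact_mod_cast hw₁
  · rw [mul_mul_conjTranspose_mul_self_of_isometry hB₁,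
      trace_mul_mul_conjTranspose_of_isometry hB₁, diagonal_mul_diagonal, trace_diagonal, ← hw₂]
    push_cast
    simp only [sq]

lemma one_div_le_sq_of_one_div_sqrt_le {x r : ℝ} (hx : 0 < x) (h : 1 / √x ≤ r) :
    1 / x ≤ r ^ 2 := by
  have := pow_le_pow_left₀ (by positivity) h 2
  rwa [div_pow, one_pow, Real.sq_sqrt hx.le] at this

/-- For every odd dimension `d ≥ 3` and every
`1/√(d−1) ≤ r ≤ √((d−2)/2)`, there is a `d×d` density matrix with
`S_R = r` and `S_I² = 1 + r²`. -/
theorem quadratic_bound_saturated_odd (d : ℕ) (hd : 3 ≤ d) (hdodd : Odd d)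
    (r : ℝ) (hr0 : 1 / Real.sqrt ((d : ℝ) - 1) ≤ r)
    (hr1 : r ≤ Real.sqrt (((d : ℝ) - 2) / 2)) :
    ∃ ρ : Matrix (Fin d) (Fin d) ℂ, IsDensityMatrix ρ ∧
      SR d ρ = r ∧ SI d ρ ^ 2 = 1 + r ^ 2 := by
  obtain ⟨k, rfl⟩ := hdodd
  have hk : (1 : ℝ) ≤ k := by exact_mod_cast (by omega : 1 ≤ k)
  push_cast at hr0 hr1
  rw [add_sub_cancel_right] at hr0
  have hr : 0 < r := lt_of_lt_of_le (by positivity) hr0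
  have hr₁ : 1 / (2 * k) ≤ r ^ 2 := one_div_le_sq_of_one_div_sqrt_le (by positivity) hr0
  have hr₂ : r ^ 2 ≤ (2 * k + 1 - 2) / 2 := (Real.le_sqrt' hr).1 hr1
  set p : ℝ := 2 * (1 + r ^ 2) / (2 * k + 1)
  have hp₁ : 1 / k ≤ p := by
    rw [div_le_iff₀ (by positivity)] at hr₁
    rw [div_le_div_iff₀ (by positivity) (by positivity)]
    nlinarith
  have hp₂ : p ≤ 1 := by
    rw [div_le_one (by positivity)]
    linarith
  obtain ⟨ρ, hρ, hρp, hρT⟩ :=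
    exists_isDensityMatrix_purity_eq (d := 2 * k + 1) (by omega) (by omega) hp₁ hp₂
  have hdp : ((2 * k + 1 : ℕ) : ℝ) * p / 2 = 1 + r ^ 2 := by
    simp only [p]
    push_cast
    field_simp
  refine ⟨ρ, hρ, ?_, ?_⟩
  · rw [SR_eq_of_mul_transpose_eq_zero hρT hρp, hdp, add_sub_cancel_left, Real.sqrt_sq hr.le]
  · rw [SI_eq_of_mul_transpose_eq_zero hρT hρp, hdp, Real.sq_sqrt (by positivity)]
end

section
/- Proposition 2: For every d×d complex density matrix ρ in odd dimension d ≥ 3 with S_R ≤ 1/√(d−1), the quantities S_R and S_I satisfy √d · S_I ≤ √(d−1) + S_R. -/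
open Matrix
open scoped ComplexOrder

noncomputable section

/-! Since `ρᵀ` is the entrywise conjugate of `ρ`, the matrix `I` is Hermitian and antisymmetric,
so in odd dimension `det I = 0` and `I` has an eigenvalue `0`. In an eigenbasis of `I` with
eigenvalues `μ`, the diagonal entries `r` of `R` satisfy `r ± μ ≥ 0` (they are diagonal entries
of `d ρ` and `d ρᵀ`), `∑ r = d` and `∑ r² ≤ Tr R² = d (S_R² + 1)`. If `μ j = 0`, Cauchy–Schwarz
on the other `d - 1` coordinates gives `|r j - 1| ≤ √(d-1) S_R ≤ 1`, hence
`Tr I² = ∑ μ² ≤ Tr R² - (r j)² ≤ d (S_R² + 1) - (1 - √(d-1) S_R)² = (√(d-1) + S_R)²`. -/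

open Finset

section Scalar

variable {ι : Type*} [Fintype ι]

theorem sq_sub_one_le_of_sum_eq_card {r : ι → ℝ} {a : ℝ} (hsum : ∑ i, r i = Fintype.card ι)
    (hsq : ∑ i, r i ^ 2 ≤ Fintype.card ι * (a + 1)) (j : ι) :
    (r j - 1) ^ 2 ≤ (Fintype.card ι - 1) * a := by
  classical
  set n : ℝ := (Fintype.card ι : ℝ)
  have hpos : 0 < Fintype.card ι := Fintype.card_pos_iff.2 ⟨j⟩
  have hn : 1 ≤ n := Nat.one_le_cast.2 hpos
  have hcard : ((univ.erase j).card : ℝ) = n - 1 := by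
    rw [card_erase_of_mem (mem_univ j), card_univ, Nat.cast_pred hpos]
  have hcs := sq_sum_le_card_mul_sum_sq (s := univ.erase j) (f := r)
  rw [hcard] at hcs
  rw [← add_sum_erase _ _ (mem_univ j)] at hsum hsq
  have h : n * (r j - 1) ^ 2 ≤ n * ((n - 1) * a) := by
    nlinarith [mul_le_mul_of_nonneg_left hsq (sub_nonneg.2 hn)]
  exact le_of_mul_le_mul_left h (by linarith)

theorem sum_sq_add_sq_le_of_abs_le {r μ : ι → ℝ} (hμr : ∀ i, |μ i| ≤ r i) {j : ι}
    (hj : μ j = 0) : ∑ i, μ i ^ 2 + r j ^ 2 ≤ ∑ i, r i ^ 2 := by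
  classical
  rw [← add_sum_erase _ _ (mem_univ j), ← add_sum_erase _ (fun i ↦ r i ^ 2) (mem_univ j), hj]
  have := sum_le_sum (s := univ.erase j) fun i _ ↦
    sq_le_sq' (abs_le.1 (hμr i)).1 (abs_le.1 (hμr i)).2
  linarith

theorem sqrt_le_sqrt_add_sqrt_of_sq_sub_one_le {c a t M : ℝ} (hc : 0 < c)
    (ht : (t - 1) ^ 2 ≤ c * a) (ha : √a ≤ 1 / √c) (hM : M ≤ (c + 1) * (a + 1) - t ^ 2) :
    √M ≤ √c + √a := by
  have ha0 : 0 ≤ a := nonneg_of_mul_nonneg_right ((sq_nonneg _).trans ht) hc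
  have hp : √c * √a ≤ 1 := by
    rw [mul_comm]; exact (le_div_iff₀ (Real.sqrt_pos.2 hc)).1 ha
  have ht1 : 1 - √c * √a ≤ t := by
    have := Real.abs_le_sqrt ht
    rw [Real.sqrt_mul hc.le] at this
    linarith [neg_abs_le (t - 1)]
  have ht2 : (1 - √c * √a) ^ 2 ≤ t ^ 2 := pow_le_pow_left₀ (by linarith) ht1 2
  have hM' : M ≤ (√c + √a) ^ 2 := by
    nlinarith [Real.sq_sqrt hc.le, Real.sq_sqrt ha0]
  exact Real.sqrt_le_sqrt hM' |>.trans_eq (Real.sqrt_sq (by positivity))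

theorem sqrt_sum_sq_le_of_abs_le {r μ : ι → ℝ} {a : ℝ} (hcard : 1 < Fintype.card ι)
    (hsum : ∑ i, r i = Fintype.card ι) (hsq : ∑ i, r i ^ 2 ≤ Fintype.card ι * (a + 1))
    (hμr : ∀ i, |μ i| ≤ r i) {j : ι} (hj : μ j = 0) (ha : √a ≤ 1 / √(Fintype.card ι - 1)) :
    √(∑ i, μ i ^ 2) ≤ √(Fintype.card ι - 1) + √a := by
  refine sqrt_le_sqrt_add_sqrt_of_sq_sub_one_le (t := r j) ?_
    (sq_sub_one_le_of_sum_eq_card hsum hsq j) ha ?_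
  · rw [sub_pos, Nat.one_lt_cast]; exact hcard
  · rw [sub_add_cancel]; linarith [sum_sq_add_sq_le_of_abs_le hμr hj]

end Scalar

theorem Matrix.det_eq_zero_of_transpose_eq_neg {n R : Type*} [Fintype n] [DecidableEq n]
    [CommRing R] [NoZeroDivisors R] [CharZero R] {A : Matrix n n R}
    (hcard : Odd (Fintype.card n)) (hA : Aᵀ = -A) : A.det = 0 := by
  have h := A.det_transpose
  rw [hA, det_neg, hcard.neg_one_pow, neg_one_mul] at h
  exact CharZero.eq_neg_self_iff.1 h.symm

section Hermitian

variable {𝕜 n : Type*} [RCLike 𝕜] [Fintype n]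

theorem Matrix.IsHermitian.sum_sq_re_diag_le {A : Matrix n n 𝕜} (hA : A.IsHermitian) :
    ∑ i, RCLike.re (A i i) ^ 2 ≤ RCLike.re (A * A).trace := by
  rw [trace, map_sum]
  refine sum_le_sum fun i _ ↦ ?_
  have hentry : ∀ k, RCLike.re (A i k * A k i) = ‖A i k‖ ^ 2 := fun k ↦ by
    rw [← hA.apply k i, RCLike.star_def, RCLike.mul_conj, ← RCLike.ofReal_pow, RCLike.ofReal_re]
  calc RCLike.re (A i i) ^ 2 ≤ ‖A i i‖ ^ 2 := by
        rw [← sq_abs]; exact pow_le_pow_left₀ (abs_nonneg _) (RCLike.abs_re_le_norm _) 2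
    _ ≤ ∑ k, ‖A i k‖ ^ 2 :=
        single_le_sum (f := fun k ↦ ‖A i k‖ ^ 2) (fun _ _ ↦ by positivity) (mem_univ i)
    _ = RCLike.re ((A * A) i i) := by simp only [mul_apply, map_sum, hentry]

variable [DecidableEq n]

theorem Matrix.trace_conjStarAlgAut (u : unitaryGroup n 𝕜) (A : Matrix n n 𝕜) :
    (Unitary.conjStarAlgAut 𝕜 _ u A).trace = A.trace := by
  rw [Unitary.conjStarAlgAut_apply, trace_mul_cycle, Unitary.coe_star_mul_self, Matrix.one_mul]

theorem Matrix.IsHermitian.exists_eigenvalues_eq_zero {A : Matrix n n 𝕜} (hA : A.IsHermitian)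
    (hdet : A.det = 0) : ∃ i, hA.eigenvalues i = 0 := by
  rw [hA.det_eq_prod_eigenvalues, prod_eq_zero_iff] at hdet
  obtain ⟨i, -, hi⟩ := hdet
  exact ⟨i, RCLike.ofReal_eq_zero.1 hi⟩

theorem Matrix.IsHermitian.re_trace_mul_self {A : Matrix n n 𝕜} (hA : A.IsHermitian) :
    RCLike.re (A * A).trace = ∑ i, hA.eigenvalues i ^ 2 := by
  rw [← trace_conjStarAlgAut (star hA.eigenvectorUnitary), map_mul,
    hA.conjStarAlgAut_star_eigenvectorUnitary, diagonal_mul_diagonal, trace_diagonal, map_sum]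
  simp [sq]

/-- `r` is the diagonal of `A` in an eigenbasis of `B`. -/
theorem Matrix.IsHermitian.exists_abs_eigenvalues_le {A B : Matrix n n 𝕜} (hB : B.IsHermitian)
    (hadd : (A + B).PosSemidef) (hsub : (A - B).PosSemidef) :
    ∃ r : n → ℝ, (∀ i, |hB.eigenvalues i| ≤ r i) ∧ ∑ i, r i = RCLike.re A.trace ∧
      ∑ i, r i ^ 2 ≤ RCLike.re (A * A).trace := by
  set φ := Unitary.conjStarAlgAut 𝕜 (Matrix n n 𝕜) (star hB.eigenvectorUnitary)
  have hφB : φ B = diagonal (RCLike.ofReal ∘ hB.eigenvalues) :=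
    hB.conjStarAlgAut_star_eigenvectorUnitary
  have hφ_psd {X : Matrix n n 𝕜} (hX : X.PosSemidef) : (φ X).PosSemidef := by
    simpa [φ, star_eq_conjTranspose] using
      hX.conjTranspose_mul_mul_same (hB.eigenvectorUnitary : Matrix n n 𝕜)
  have hA : (φ A).IsHermitian := by
    simpa using (hadd.isHermitian.sub hB).isSelfAdjoint.map φ |>.isHermitian
  have hre_diag {X : Matrix n n 𝕜} (hX : X.PosSemidef) (i : n) : 0 ≤ RCLike.re (φ X i i) :=
    (RCLike.nonneg_iff.1 (hφ_psd hX).diag_nonneg).1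
  refine ⟨fun i ↦ RCLike.re (φ A i i), fun i ↦ abs_le.2 ⟨?_, ?_⟩, ?_, ?_⟩
  · have := hre_diag hadd i
    simp only [map_add, hφB, Matrix.add_apply, diagonal_apply_eq, Function.comp_apply,
      RCLike.ofReal_re] at this
    linarith
  · have := hre_diag hsub i
    simp only [map_sub, hφB, Matrix.sub_apply, diagonal_apply_eq, Function.comp_apply,
      RCLike.ofReal_re] at this
    linarith
  · rw [← trace_conjStarAlgAut (star hB.eigenvectorUnitary) A, trace, map_sum]
    rfl
  · rw [← trace_conjStarAlgAut (star hB.eigenvectorUnitary) (A * A), map_mul]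
    exact hA.sum_sq_re_diag_le

end Hermitian

section Parts

variable (d : ℕ) (ρ : Matrix (Fin d) (Fin d) ℂ)

theorem Ipart_transpose : (Ipart d ρ)ᵀ = -Ipart d ρ := by
  rw [Ipart, transpose_smul, transpose_sub, transpose_transpose, ← neg_sub, smul_neg]

theorem Rpart_add_Ipart : Rpart d ρ + Ipart d ρ = (d : ℂ) • ρ := by
  rw [Rpart, Ipart]; module

theorem Rpart_sub_Ipart : Rpart d ρ - Ipart d ρ = (d : ℂ) • ρᵀ := by
  rw [Rpart, Ipart]; module

variable {d ρ}

theorem trace_Rpart (hρ : ρ.trace = 1) : (Rpart d ρ).trace = d := by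
  rw [Rpart, trace_smul, trace_add, trace_transpose, hρ, smul_eq_mul]; ring

theorem isHermitian_Ipart (hρ : ρ.IsHermitian) : (Ipart d ρ).IsHermitian := by
  rw [IsHermitian, Ipart, conjTranspose_smul, conjTranspose_sub, hρ.eq, hρ.transpose.eq]
  simp

end Parts

/-- **Proposition 2.** For every `d×d` density matrix in odd dimension
`d ≥ 3` with `S_R ≤ 1/√(d−1)`, we have `√d · S_I ≤ √(d−1) + S_R`. -/
theorem linear_bound (d : ℕ) (hd : 3 ≤ d) (hdodd : Odd d)
    (ρ : Matrix (Fin d) (Fin d) ℂ) (hρ : IsDensityMatrix ρ)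
    (hSR : SR d ρ ≤ 1 / Real.sqrt ((d : ℝ) - 1)) :
    Real.sqrt d * SI d ρ ≤ Real.sqrt ((d : ℝ) - 1) + SR d ρ := by
  obtain ⟨hpsd, htr⟩ := hρ
  have hI := isHermitian_Ipart hpsd.isHermitian
  have hd0 : (0 : ℂ) ≤ d := Nat.cast_nonneg d
  obtain ⟨r, hμr, hsum, hsq⟩ := hI.exists_abs_eigenvalues_le
    (Rpart_add_Ipart d ρ ▸ hpsd.smul hd0) (Rpart_sub_Ipart d ρ ▸ hpsd.transpose.smul hd0)
  obtain ⟨j, hj⟩ := hI.exists_eigenvalues_eq_zero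
    (det_eq_zero_of_transpose_eq_neg (by simpa using hdodd) (Ipart_transpose d ρ))
  have hdpos : (0 : ℝ) < d := by positivity
  have hM : (Ipart d ρ * Ipart d ρ).trace.re = ∑ i, hI.eigenvalues i ^ 2 := hI.re_trace_mul_self
  rw [SI, ← Real.sqrt_mul hdpos.le, mul_div_cancel₀ _ hdpos.ne', hM]
  rw [SR] at hSR ⊢
  have hcard : ((Fintype.card (Fin d) : ℕ) : ℝ) = d := by rw [Fintype.card_fin]
  refine hcard ▸ sqrt_sum_sq_le_of_abs_le (by rw [Fintype.card_fin]; omega) ?_ ?_ hμr hj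
    (hcard ▸ hSR)
  · rw [hcard, hsum, trace_Rpart htr]; rfl
  · rw [hcard, sub_add_cancel, mul_div_cancel₀ _ hdpos.ne']
    exact hsq
end
end

section
/- Let λ_1, …, λ_d be real numbers with Σ_k λ_k = 0 and |λ_k| ≤ 1 for all k. Then Σ_k λ_k² ≤ 2·⌊d/2⌋. -/
/-- If `λ_1, …, λ_d` are real numbers with `Σ λ_k = 0` and
`|λ_k| ≤ 1` for all `k`, then `Σ λ_k² ≤ 2·⌊d/2⌋`. -/
theorem sum_sq_le_two_floor (d : ℕ) (hd : 0 < d) (lam : Fin d → ℝ)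
    (hsum : ∑ k, lam k = 0) (habs : ∀ k, |lam k| ≤ 1) :
    ∑ k, lam k ^ 2 ≤ 2 * ((d / 2 : ℕ) : ℝ) := by
  classical
  set S := Finset.univ.filter (fun k => 0 < lam k) with hS
  set T := Finset.univ.filter (fun k => lam k < 0) with hT
  have hdisj : Disjoint S T := by
    simp only [Finset.disjoint_left, hS, hT, Finset.mem_filter]
    rintro a ⟨-, h1⟩ ⟨-, h2⟩
    linarith
  have hcard : S.card + T.card ≤ d := by
    have h1 : (S ∪ T).card ≤ d := by
      simpa using Finset.card_le_univ (S ∪ T)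
    rwa [Finset.card_union_of_disjoint hdisj] at h1
  -- step 1: Σ λ² ≤ Σ |λ|
  have step1 : ∑ k, lam k ^ 2 ≤ ∑ k, |lam k| := by
    apply Finset.sum_le_sum
    intro k _
    have h := abs_nonneg (lam k)
    calc lam k ^ 2 = |lam k| ^ 2 := by rw [sq_abs]
    _ = |lam k| * |lam k| := sq (|lam k|) ▸ by ring
    _ ≤ 1 * |lam k| := by nlinarith [habs k]
    _ = |lam k| := one_mul _
  -- Σ|λ| = 2 Σ max(λ,0) and = 2 Σ max(-λ,0)
  have habs_pos : ∀ x : ℝ, |x| = -x + 2 * max x 0 := by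
    intro x
    rcases le_total x 0 with h | h
    · rw [abs_of_nonpos h, max_eq_right h]; ring
    · rw [abs_of_nonneg h, max_eq_left h]; ring
  have habs_neg : ∀ x : ℝ, |x| = x + 2 * max (-x) 0 := by
    intro x
    rcases le_total x 0 with h | h
    · rw [abs_of_nonpos h, max_eq_left (by linarith)]; ring
    · rw [abs_of_nonneg h, max_eq_right (by linarith)]; ring
  have hsum_pos : ∑ k, |lam k| = 2 * ∑ k, max (lam k) 0 := by
    simp only [habs_pos, Finset.sum_add_distrib, Finset.sum_neg_distrib, hsum,
      ← Finset.mul_sum]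
    ring_nf
  have hsum_neg : ∑ k, |lam k| = 2 * ∑ k, max (-lam k) 0 := by
    simp only [habs_neg, Finset.sum_add_distrib, hsum, ← Finset.mul_sum]
    ring_nf
  -- Σ max(λ,0) ≤ S.card
  have hP : ∑ k, max (lam k) 0 ≤ (S.card : ℝ) := by
    have h1 : ∑ k, max (lam k) 0 = ∑ k ∈ S, max (lam k) 0 := by
      rw [eq_comm]
      apply Finset.sum_subset (Finset.subset_univ S)
      intro x _ hx
      simp only [hS, Finset.mem_filter, Finset.mem_univ, true_and, not_lt] at hx
      exact max_eq_right hx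
    rw [h1]
    calc ∑ k ∈ S, max (lam k) 0 ≤ ∑ k ∈ S, (1 : ℝ) := by
          apply Finset.sum_le_sum
          intro k _
          exact max_le (le_of_abs_le (habs k)) one_pos.le
    _ = S.card := by simp
  have hN : ∑ k, max (-lam k) 0 ≤ (T.card : ℝ) := by
    have h1 : ∑ k, max (-lam k) 0 = ∑ k ∈ T, max (-lam k) 0 := by
      rw [eq_comm]
      apply Finset.sum_subset (Finset.subset_univ T)
      intro x _ hx
      simp only [hT, Finset.mem_filter, Finset.mem_univ, true_and, not_lt] at hx
      exact max_eq_right (by linarith)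
    rw [h1]
    calc ∑ k ∈ T, max (-lam k) 0 ≤ ∑ k ∈ T, (1 : ℝ) := by
          apply Finset.sum_le_sum
          intro k _
          have := (abs_le.mp (habs k)).1
          exact max_le (by linarith) one_pos.le
    _ = T.card := by simp
  -- min card bound
  have hmin : min S.card T.card ≤ d / 2 := by
    rw [Nat.le_div_iff_mul_le (by norm_num)]
    have : min S.card T.card * 2 ≤ S.card + T.card := by
      rcases le_total S.card T.card with h | h <;> simp [min_eq_left, min_eq_right, h] <;> omega
    omega
  rcases le_total S.card T.card with h | h
  · have : (S.card : ℝ) ≤ ((d / 2 : ℕ) : ℝ) := by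
      rw [min_eq_left h] at hmin; exact_mod_cast hmin
    calc ∑ k, lam k ^ 2 ≤ ∑ k, |lam k| := step1
    _ = 2 * ∑ k, max (lam k) 0 := hsum_pos
    _ ≤ 2 * (S.card : ℝ) := by linarith
    _ ≤ 2 * ((d / 2 : ℕ) : ℝ) := by linarith
  · have : (T.card : ℝ) ≤ ((d / 2 : ℕ) : ℝ) := by
      rw [min_eq_right h] at hmin; exact_mod_cast hmin
    calc ∑ k, lam k ^ 2 ≤ ∑ k, |lam k| := step1
    _ = 2 * ∑ k, max (-lam k) 0 := hsum_neg
    _ ≤ 2 * (T.card : ℝ) := by linarith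
    _ ≤ 2 * ((d / 2 : ℕ) : ℝ) := by linarith
end

section
/- Let d be odd, let A be a d×d complex Hermitian positive semidefinite matrix, and let B be a d×d complex Hermitian matrix with Bᵀ = −B (purely imaginary entries). If both A + B and A − B are positive semidefinite, then Tr(B²) ≤ Tr(A²) − λ_min(A)², where λ_min(A) is the smallest eigenvalue of A. -/
/-!
Since `Bᵀ = -B` and `d` is odd, `det B = -det B`, so `B` has the eigenvalue `0`. Conjugate
everything into an orthonormal eigenbasis of `B`, with eigenvalues `μᵢ` and `μₖ = 0`, and let `aᵢ`
be the (real) diagonal entries of `A` in that basis. Positivity of `A ± B` gives `|μᵢ| ≤ aᵢ`, and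
`aₖ ≥ λ_min(A)` because `A - λ_min(A)` is positive semidefinite. Hence
`Tr B² = ∑_{i ≠ k} μᵢ² ≤ ∑ᵢ aᵢ² - aₖ² ≤ Tr A² - λ_min(A)²`.
-/

open Matrix
open scoped ComplexOrder
open RCLike Unitary

theorem Fintype.sum_sq_le_sum_sq_sub_sq {ι : Type*} [Fintype ι] {f g : ι → ℝ} {k : ι} {c : ℝ}
    (hk : f k = 0) (hfg : ∀ i, |f i| ≤ g i) (hc₀ : 0 ≤ c) (hc : c ≤ g k) :
    ∑ i, f i ^ 2 ≤ ∑ i, g i ^ 2 - c ^ 2 := by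
  classical
  rw [← Finset.add_sum_erase _ _ (Finset.mem_univ k), ← Finset.add_sum_erase _ _ (Finset.mem_univ k),
    hk]
  have hrest : ∑ i ∈ Finset.univ.erase k, f i ^ 2 ≤ ∑ i ∈ Finset.univ.erase k, g i ^ 2 :=
    Finset.sum_le_sum fun i _ ↦ sq_le_sq' (abs_le.mp (hfg i)).1 (abs_le.mp (hfg i)).2
  nlinarith

namespace Matrix

variable {n 𝕜 : Type*} [RCLike 𝕜]

theorem PosSemidef.abs_re_diag_le {A B : Matrix n n 𝕜} (hadd : (A + B).PosSemidef)
    (hsub : (A - B).PosSemidef) (i : n) : |re (B i i)| ≤ re (A i i) := by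
  have hadd' := (nonneg_iff.mp (hadd.diag_nonneg (i := i))).1
  have hsub' := (nonneg_iff.mp (hsub.diag_nonneg (i := i))).1
  rw [add_apply, map_add] at hadd'
  rw [sub_apply, map_sub] at hsub'
  exact abs_le.mpr ⟨by linarith, by linarith⟩

variable [Fintype n]

theorem IsHermitian.sum_sq_re_diag_le_re_trace_mul_self {A : Matrix n n 𝕜} (hA : A.IsHermitian) :
    ∑ i, re (A i i) ^ 2 ≤ re (A * A).trace := by
  have hdiag (i : n) : re ((A * A) i i) = ∑ j, ‖A i j‖ ^ 2 := by
    have hji (j : n) : A j i = star (A i j) := by rw [← conjTranspose_apply, hA.eq]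
    simp only [mul_apply, hji, star_def, mul_conj, map_sum, ← ofReal_pow, ofReal_re]
  rw [trace, map_sum]
  refine Finset.sum_le_sum fun i _ ↦ ?_
  calc re (A i i) ^ 2 ≤ ‖A i i‖ ^ 2 := sq_le_sq' (abs_le.mp (abs_re_le_norm _)).1 (re_le_norm _)
    _ ≤ ∑ j, ‖A i j‖ ^ 2 := Finset.single_le_sum (fun j _ ↦ sq_nonneg ‖A i j‖) (Finset.mem_univ i)
    _ = re ((A * A).diag i) := (hdiag i).symm

variable [DecidableEq n]

theorem det_eq_zero_of_transpose_eq_neg_s11 {R : Type*} [CommRing R] [NoZeroDivisors R] [CharZero R]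
    {B : Matrix n n R} (hn : Odd (Fintype.card n)) (hB : Bᵀ = -B) : B.det = 0 := by
  rw [← CharZero.eq_neg_self_iff]
  conv_lhs => rw [← det_transpose, hB, det_neg, hn.neg_one_pow, neg_one_mul]

theorem IsHermitian.exists_eigenvalues_eq_zero_s11 {A : Matrix n n 𝕜} (hA : A.IsHermitian)
    (h : A.det = 0) : ∃ i, hA.eigenvalues i = 0 := by
  rw [hA.det_eq_prod_eigenvalues, Finset.prod_eq_zero_iff] at h
  obtain ⟨i, -, hi⟩ := h
  exact ⟨i, mod_cast hi⟩

theorem trace_conjStarAlgAut_s11 (U : unitaryGroup n 𝕜) (M : Matrix n n 𝕜) :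
    (conjStarAlgAut 𝕜 _ U M).trace = M.trace := by
  rw [conjStarAlgAut_apply, trace_mul_cycle, coe_star_mul_self, one_mul]

theorem PosSemidef.conjStarAlgAut {M : Matrix n n 𝕜} (hM : M.PosSemidef) (U : unitaryGroup n 𝕜) :
    (conjStarAlgAut 𝕜 _ U M).PosSemidef := by
  simpa [star_eq_conjTranspose] using hM.mul_mul_conjTranspose_same (U : Matrix n n 𝕜)

theorem IsHermitian.re_trace_mul_self_s11 {A : Matrix n n 𝕜} (hA : A.IsHermitian) :
    re (A * A).trace = ∑ i, hA.eigenvalues i ^ 2 := by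
  rw [← trace_conjStarAlgAut_s11 (star hA.eigenvectorUnitary), map_mul,
    hA.conjStarAlgAut_star_eigenvectorUnitary, diagonal_mul_diagonal, trace_diagonal]
  simp [sq]

open scoped MatrixOrder in
theorem IsHermitian.posSemidef_sub_algebraMap {A : Matrix n n 𝕜} (hA : A.IsHermitian) {c : ℝ}
    (hc : ∀ i, c ≤ hA.eigenvalues i) : (A - algebraMap ℝ _ c).PosSemidef := by
  rw [← le_iff, algebraMap_le_iff_le_spectrum, hA.spectrum_real_eq_range_eigenvalues]
  rintro _ ⟨i, rfl⟩
  exact hc i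

theorem IsHermitian.le_re_diag_conjStarAlgAut {A : Matrix n n 𝕜} (hA : A.IsHermitian)
    (U : unitaryGroup n 𝕜) {c : ℝ} (hc : ∀ i, c ≤ hA.eigenvalues i) (k : n) :
    c ≤ re (conjStarAlgAut 𝕜 _ U A k k) := by
  have h := ((hA.posSemidef_sub_algebraMap hc).conjStarAlgAut U).diag_nonneg (i := k)
  rw [map_sub, IsScalarTower.algebraMap_apply ℝ 𝕜, AlgHomClass.commutes,
    ← IsScalarTower.algebraMap_apply] at h
  simpa [algebraMap_eq_diagonal] using (nonneg_iff.mp h).1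

end Matrix

/-- Let `d` be odd, `A` Hermitian positive semidefinite and `B`
Hermitian with `Bᵀ = −B`. If `A + B` and `A − B` are positive semidefinite, then
`Tr(B²) ≤ Tr(A²) − λ_min(A)²`. -/
theorem trace_sq_le_sub_min_eigenvalue_sq (d : ℕ) (hd : Odd d)
    (A B : Matrix (Fin d) (Fin d) ℂ)
    (hA : A.PosSemidef) (hB : B.IsHermitian) (hskew : B.transpose = -B)
    (hplus : (A + B).PosSemidef) (hminus : (A - B).PosSemidef) :
    (B * B).trace.re ≤ (A * A).trace.re - (⨅ i, hA.1.eigenvalues i) ^ 2 := by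
  set Φ := conjStarAlgAut ℂ (Matrix (Fin d) (Fin d) ℂ) (star hB.eigenvectorUnitary)
  set μ := hB.eigenvalues
  obtain ⟨k, hk⟩ := hB.exists_eigenvalues_eq_zero_s11
    (det_eq_zero_of_transpose_eq_neg_s11 (by simpa using hd) hskew)
  have hΦB : Φ B = diagonal (ofReal ∘ μ) := hB.conjStarAlgAut_star_eigenvectorUnitary
  have hμ (i : Fin d) : |μ i| ≤ re (Φ A i i) := by
    have h := PosSemidef.abs_re_diag_le (map_add Φ A B ▸ hplus.conjStarAlgAut _)
      (map_sub Φ A B ▸ hminus.conjStarAlgAut _) i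
    rwa [hΦB, diagonal_apply_eq, Function.comp_apply, ofReal_re] at h
  have hmin : (⨅ i, hA.1.eigenvalues i) ≤ re (Φ A k k) :=
    hA.1.le_re_diag_conjStarAlgAut _ (ciInf_le (Set.finite_range _).bddBelow) k
  calc (B * B).trace.re = ∑ i, μ i ^ 2 := hB.re_trace_mul_self_s11
    _ ≤ ∑ i, re (Φ A i i) ^ 2 - (⨅ i, hA.1.eigenvalues i) ^ 2 :=
      Fintype.sum_sq_le_sum_sq_sub_sq hk hμ (Real.iInf_nonneg hA.eigenvalues_nonneg) hmin
    _ ≤ (Φ A * Φ A).trace.re - (⨅ i, hA.1.eigenvalues i) ^ 2 := by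
      gcongr
      exact (hA.conjStarAlgAut _).1.sum_sq_re_diag_le_re_trace_mul_self
    _ = (A * A).trace.re - (⨅ i, hA.1.eigenvalues i) ^ 2 := by
      rw [← map_mul, trace_conjStarAlgAut_s11]
end

section
/- For every odd dimension d ≥ 3 and every real r with 0 ≤ r ≤ 1/√(d−1), there exists a d×d complex density matrix ρ with S_R(ρ) = r and √d · S_I(ρ) = √(d−1) + r (i.e., the linear bound of Proposition 2 is saturated). In particular, the block-diagonal state with (d−1)/2 identical 2×2 blocks α·[[1, −i],[i, 1]] and final diagonal entry 1 − (d−1)α, for 1/d ≤ α ≤ 1/(d−1), has S_R = √(d−1)·(dα − 1) and S_I = √(d(d−1))·α. -/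
open Matrix
open scoped ComplexOrder

noncomputable section

/-- The block-diagonal state with `(d−1)/2` identical `2×2` blocks
`α·[[1, −i],[i, 1]]` (on index pairs `(2j, 2j+1)`) and final diagonal entry
`1 − (d−1)α`. -/
def blockState (d : ℕ) (α : ℝ) : Matrix (Fin d) (Fin d) ℂ :=
  Matrix.of fun k l =>
    if k = l then
      (if (k : ℕ) = d - 1 then ((1 - ((d : ℝ) - 1) * α : ℝ) : ℂ) else ((α : ℝ) : ℂ))
    else if (k : ℕ) % 2 = 0 ∧ (l : ℕ) = (k : ℕ) + 1 then -Complex.I * (α : ℂ)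
    else if (l : ℕ) % 2 = 0 ∧ (k : ℕ) = (l : ℕ) + 1 then Complex.I * (α : ℂ)
    else 0

/-!
Write `ρ = D + α P`, where `D` is the real diagonal of `ρ` and `P` is the Hermitian, purely
imaginary matrix with entries `∓i` at the positions `(2j, 2j+1)`, `(2j+1, 2j)`. Since `D` is
symmetric and `P` antisymmetric, `R = d D` and `I = d α P`. For odd `d`, `P²` is the identity on
all coordinates but the last, so `Tr R² = d²((1 - (d-1)α)² + (d-1)α²)` and `Tr I² = d²(d-1)α²`.
Positivity: `P³ = P` makes `(P² + P)/2` an orthogonal projection, and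
`ρ = diag(0, …, 0, 1 - (d-1)α) + α (P² + P)`. The bound is saturated by choosing
`d α = 1 + r / √(d-1)`.
-/

lemma Fin.sum_ite_val_eq_sub_one {M : Type*} [AddCommMonoid M] {d : ℕ} (hd : 0 < d) (a b : M) :
    ∑ k : Fin d, (if (k : ℕ) = d - 1 then a else b) = a + (d - 1) • b := by
  obtain ⟨n, rfl⟩ : ∃ n, d = n + 1 := ⟨d - 1, by omega⟩
  simp [Fin.sum_univ_castSucc, Fin.val_castSucc, Nat.ne_of_lt, add_comm]

lemma Matrix.IsHermitian.posSemidef_mul_self_add_self {n 𝕜 : Type*} [Fintype n] [RCLike 𝕜]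
    {P : Matrix n n 𝕜} (hP : P.IsHermitian) (hP3 : P * P * P = P) :
    (P * P + P).PosSemidef := by
  have hsq : (P * P + P)ᴴ * (P * P + P) = (2 : ℝ) • (P * P + P) := by
    simp only [conjTranspose_add, conjTranspose_mul, hP.eq, add_mul, mul_add, ← mul_assoc, hP3]
    rw [two_smul]
    abel
  have := (posSemidef_conjTranspose_mul_self (P * P + P)).smul (by norm_num : (0 : ℝ) ≤ 1 / 2)
  rwa [hsq, smul_smul, one_div, inv_mul_cancel₀ two_ne_zero, one_smul] at this

lemma Rpart_add_of_transpose {d : ℕ} {S A : Matrix (Fin d) (Fin d) ℂ} (hS : Sᵀ = S)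
    (hA : Aᵀ = -A) : Rpart d (S + A) = (d : ℂ) • S := by
  rw [Rpart, transpose_add, hS, hA]
  module

lemma Ipart_add_of_transpose {d : ℕ} {S A : Matrix (Fin d) (Fin d) ℂ} (hS : Sᵀ = S)
    (hA : Aᵀ = -A) : Ipart d (S + A) = (d : ℂ) • A := by
  rw [Ipart, transpose_add, hS, hA]
  module

def pairingMatrix (d : ℕ) : Matrix (Fin d) (Fin d) ℂ :=
  Matrix.of fun k l =>
    if (k : ℕ) % 2 = 0 ∧ (l : ℕ) = (k : ℕ) + 1 then -Complex.I
    else if (l : ℕ) % 2 = 0 ∧ (k : ℕ) = (l : ℕ) + 1 then Complex.I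
    else 0

lemma isHermitian_pairingMatrix (d : ℕ) : (pairingMatrix d).IsHermitian := by
  ext k l
  simp only [pairingMatrix, conjTranspose_apply, of_apply]
  split_ifs <;> first | (exfalso; omega) | simp

lemma pairingMatrix_transpose (d : ℕ) : (pairingMatrix d)ᵀ = -pairingMatrix d := by
  ext k l
  simp only [pairingMatrix, transpose_apply, Matrix.neg_apply, of_apply]
  split_ifs <;> first | (exfalso; omega) | simp

lemma trace_pairingMatrix (d : ℕ) : (pairingMatrix d).trace = 0 := by
  simp [trace, pairingMatrix]

lemma pairingMatrix_mul_self {d : ℕ} (hd : Odd d) :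
    pairingMatrix d * pairingMatrix d =
      diagonal (fun k : Fin d => if (k : ℕ) = d - 1 then 0 else 1) := by
  obtain ⟨m, rfl⟩ := hd
  ext k l
  rw [mul_apply, diagonal_apply]
  have hk := k.is_lt
  by_cases hlast : (k : ℕ) = 2 * m + 1 - 1
  · refine (Finset.sum_eq_zero fun j _ => ?_).trans (by simp [hlast])
    have hj := j.is_lt
    simp only [pairingMatrix, of_apply]
    split_ifs <;> first | (exfalso; omega) | simp
  · let p : Fin (2 * m + 1) := ⟨(k : ℕ) + 1 - 2 * ((k : ℕ) % 2), by omega⟩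
    rw [Finset.sum_eq_single p]
    · have hl := l.is_lt
      simp only [pairingMatrix, of_apply, p, Fin.ext_iff, if_neg hlast]
      split_ifs <;> first | (exfalso; omega) | simp
    · intro j _ hjp
      simp only [pairingMatrix, of_apply]
      split_ifs <;> first | (exfalso; exact hjp (Fin.ext (by simp only [p]; omega))) | simp
    · simp

lemma pairingMatrix_mul_self_mul_self {d : ℕ} (hd : Odd d) :
    pairingMatrix d * pairingMatrix d * pairingMatrix d = pairingMatrix d := by
  rw [pairingMatrix_mul_self hd]
  obtain ⟨m, rfl⟩ := hd
  ext k l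
  simp only [diagonal_mul, pairingMatrix, of_apply]
  split_ifs <;> first | (exfalso; omega) | simp

lemma trace_pairingMatrix_mul_self {d : ℕ} (hd : Odd d) :
    (pairingMatrix d * pairingMatrix d).trace = (d : ℂ) - 1 := by
  rw [pairingMatrix_mul_self hd, trace_diagonal, Fin.sum_ite_val_eq_sub_one hd.pos]
  simp [Nat.cast_sub hd.pos]

def blockWeights (d : ℕ) (α : ℝ) (k : Fin d) : ℝ :=
  if (k : ℕ) = d - 1 then 1 - ((d : ℝ) - 1) * α else α

lemma sum_comp_blockWeights {M : Type*} [AddCommMonoid M] {d : ℕ} (hd : 0 < d) (α : ℝ)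
    (f : ℝ → M) :
    ∑ k, f (blockWeights d α k) = f (1 - ((d : ℝ) - 1) * α) + (d - 1) • f α := by
  simp only [blockWeights, apply_ite f]
  exact Fin.sum_ite_val_eq_sub_one hd _ _

lemma blockState_eq (d : ℕ) (α : ℝ) :
    blockState d α =
      diagonal (fun k => (blockWeights d α k : ℂ)) + (α : ℂ) • pairingMatrix d := by
  ext k l
  by_cases hkl : k = l
  · subst hkl
    simp [blockState, blockWeights, pairingMatrix, apply_ite Complex.ofReal]
  · simp only [blockState, blockWeights, pairingMatrix, of_apply, Matrix.add_apply,
      Matrix.smul_apply, diagonal_apply_ne _ hkl, if_neg hkl, smul_eq_mul, zero_add]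
    split_ifs <;> ring

lemma isDensityMatrix_blockState {d : ℕ} (hd : Odd d) {α : ℝ} (h0 : 0 ≤ α)
    (h1 : ((d : ℝ) - 1) * α ≤ 1) : IsDensityMatrix (blockState d α) := by
  have hP := isHermitian_pairingMatrix d
  refine ⟨?_, ?_⟩
  · have hsplit : blockState d α =
        diagonal (fun k : Fin d => if (k : ℕ) = d - 1 then ((1 - ((d : ℝ) - 1) * α : ℝ) : ℂ)
          else 0) + (α : ℂ) • (pairingMatrix d * pairingMatrix d + pairingMatrix d) := by
      rw [blockState_eq, pairingMatrix_mul_self hd, smul_add, ← add_assoc, ← diagonal_smul,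
        diagonal_add]
      congr 2
      ext k
      simp only [blockWeights, Pi.smul_apply]
      split_ifs <;> simp
    rw [hsplit]
    refine (PosSemidef.diagonal fun k => ?_).add
      ((hP.posSemidef_mul_self_add_self (pairingMatrix_mul_self_mul_self hd)).smul ?_)
    · dsimp only
      split_ifs
      exacts [Complex.zero_le_real.mpr (sub_nonneg.mpr h1), le_rfl]
    · exact_mod_cast h0
  · rw [blockState_eq, trace_add, trace_smul, trace_pairingMatrix, smul_zero, add_zero,
      trace_diagonal, sum_comp_blockWeights hd.pos α Complex.ofReal, nsmul_eq_mul,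
      Nat.cast_sub hd.pos]
    push_cast
    ring

lemma SR_blockState {d : ℕ} {α : ℝ} (hα : 1 ≤ (d : ℝ) * α) :
    SR d (blockState d α) = Real.sqrt ((d : ℝ) - 1) * ((d : ℝ) * α - 1) := by
  have hd : 0 < d := Nat.pos_of_ne_zero fun h => by simp [h] at hα; linarith
  have hR : Rpart d (blockState d α) =
      (d : ℂ) • diagonal (fun k => (blockWeights d α k : ℂ)) := by
    rw [blockState_eq]
    exact Rpart_add_of_transpose (diagonal_transpose _)
      (by rw [transpose_smul, pairingMatrix_transpose, smul_neg])
  have htr : (Rpart d (blockState d α) * Rpart d (blockState d α)).trace =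
      (((d : ℝ) ^ 2 * ((1 - ((d : ℝ) - 1) * α) ^ 2 + ((d : ℝ) - 1) * α ^ 2) : ℝ) : ℂ) := by
    rw [hR, smul_mul_smul_comm, diagonal_mul_diagonal, trace_smul, trace_diagonal,
      sum_comp_blockWeights hd α fun x => (x : ℂ) * x, nsmul_eq_mul, Nat.cast_sub hd]
    push_cast
    ring
  have hd' : (d : ℝ) ≠ 0 := by positivity
  rw [SR, htr, Complex.ofReal_re,
    show (d : ℝ) ^ 2 * ((1 - ((d : ℝ) - 1) * α) ^ 2 + ((d : ℝ) - 1) * α ^ 2) / d - 1 =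
      ((d : ℝ) - 1) * ((d : ℝ) * α - 1) ^ 2 by field_simp; ring,
    Real.sqrt_mul' _ (sq_nonneg _), Real.sqrt_sq (by linarith)]

lemma SI_blockState {d : ℕ} (hd : Odd d) {α : ℝ} (h0 : 0 ≤ α) :
    SI d (blockState d α) = Real.sqrt ((d : ℝ) * ((d : ℝ) - 1)) * α := by
  have hI : Ipart d (blockState d α) = ((d : ℂ) * α) • pairingMatrix d := by
    rw [blockState_eq, Ipart_add_of_transpose (diagonal_transpose _)
      (by rw [transpose_smul, pairingMatrix_transpose, smul_neg]), smul_smul]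
  have hd' : (d : ℝ) ≠ 0 := by have := hd.pos; positivity
  rw [SI, hI, smul_mul_smul_comm, trace_smul, trace_pairingMatrix_mul_self hd, smul_eq_mul,
    show ((d : ℂ) * α) * ((d : ℂ) * α) * ((d : ℂ) - 1) =
      (((d : ℝ) * ((d : ℝ) - 1) * α ^ 2 * d : ℝ) : ℂ) by push_cast; ring,
    Complex.ofReal_re, mul_div_cancel_right₀ _ hd', Real.sqrt_mul' _ (sq_nonneg _),
    Real.sqrt_sq h0]

lemma blockState_spec {d : ℕ} (hd : 1 < d) (hdodd : Odd d) {α : ℝ} (hα₁ : 1 / (d : ℝ) ≤ α)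
    (hα₂ : α ≤ 1 / ((d : ℝ) - 1)) :
    IsDensityMatrix (blockState d α) ∧
      SR d (blockState d α) = Real.sqrt ((d : ℝ) - 1) * ((d : ℝ) * α - 1) ∧
      SI d (blockState d α) = Real.sqrt ((d : ℝ) * ((d : ℝ) - 1)) * α := by
  have hd0 : (0 : ℝ) < d := by positivity
  have hd1 : (0 : ℝ) < d - 1 := by simpa using (Nat.one_lt_cast (α := ℝ)).mpr hd
  have h0 : 0 ≤ α := le_trans (by positivity) hα₁
  refine ⟨isDensityMatrix_blockState hdodd h0 ?_, SR_blockState ?_, SI_blockState hdodd h0⟩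
  · rwa [le_div_iff₀ hd1, mul_comm] at hα₂
  · rwa [div_le_iff₀ hd0, mul_comm] at hα₁

/-- For every odd dimension `d ≥ 3` and every
`0 ≤ r ≤ 1/√(d−1)` there is a `d×d` density matrix with `S_R = r` and
`√d · S_I = √(d−1) + r` (the linear bound of Proposition 2 is saturated).
In particular, the block-diagonal state with `(d−1)/2` blocks `α·[[1,−i],[i,1]]`
and final diagonal entry `1 − (d−1)α`, for `1/d ≤ α ≤ 1/(d−1)`, is a density matrix
with `S_R = √(d−1)·(dα − 1)` and `S_I = √(d(d−1))·α`. -/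
theorem linear_bound_saturated (d : ℕ) (hd : 3 ≤ d) (hdodd : Odd d) :
    (∀ r : ℝ, 0 ≤ r → r ≤ 1 / Real.sqrt ((d : ℝ) - 1) →
      ∃ ρ : Matrix (Fin d) (Fin d) ℂ, IsDensityMatrix ρ ∧
        SR d ρ = r ∧ Real.sqrt d * SI d ρ = Real.sqrt ((d : ℝ) - 1) + r) ∧
    (∀ α : ℝ, 1 / (d : ℝ) ≤ α → α ≤ 1 / ((d : ℝ) - 1) →
      IsDensityMatrix (blockState d α) ∧
      SR d (blockState d α) = Real.sqrt ((d : ℝ) - 1) * ((d : ℝ) * α - 1) ∧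
      SI d (blockState d α) = Real.sqrt ((d : ℝ) * ((d : ℝ) - 1)) * α) := by
  have hd1 : 1 < d := by omega
  refine ⟨fun r hr₀ hr₁ => ?_, fun α => blockState_spec hd1 hdodd⟩
  have hd0 : (0 : ℝ) < d := by positivity
  have hd1' : (0 : ℝ) < d - 1 := by simpa using (Nat.one_lt_cast (α := ℝ)).mpr hd1
  set s := Real.sqrt ((d : ℝ) - 1)
  have hs : 0 < s := Real.sqrt_pos.mpr hd1'
  have hs2 : s ^ 2 = d - 1 := Real.sq_sqrt hd1'.le
  have hrs : r * s ≤ 1 := by rwa [le_div_iff₀ hs] at hr₁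
  obtain ⟨hρ, hSR, hSI⟩ := blockState_spec hd1 hdodd (α := (1 + r / s) / d)
    (by gcongr; simp [div_nonneg hr₀ hs.le])
    (by rw [div_le_div_iff₀ hd0 hd1', one_mul, ← hs2]; field_simp; nlinarith)
  refine ⟨_, hρ, ?_, ?_⟩
  · rw [hSR, mul_div_cancel₀ _ hd0.ne']
    field_simp
    ring
  · rw [hSI, Real.sqrt_mul hd0.le, ← mul_assoc, ← mul_assoc, Real.mul_self_sqrt hd0.le]
    field_simp
    ring
end
end
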